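/- Let S and A be measurable spaces, let π₁ and π₂ be Markov kernels from S to A, and let P be a Markov kernel from S × A to S. Let r : S × A × S → ℝ be measurable with 0 ≤ r(s,a,s') ≤ 1, and let γ ∈ (0,1). Let V₁, V₂ : S → ℝ be bounded measurable functions satisfying the Bellman equations Vᵢ(s) = ∫_A ∫_S (r(s,a,s') + γ·Vᵢ(s')) dP((s,a))(s') dπᵢ(s)(a) for all s ∈ S (i = 1,2). If KL(π₁(s), π₂(s)) ≤ ε_π for all s ∈ S, then |V₁(s) − V₂(s)| ≤ √(2·ε_π)/(1−γ)² for every s ∈ S. -/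

import Mathlib

/-!
Write `Qᵢ(s, a) = ∫ (r + γ Vᵢ) dP(s, a)`. Both values lie in `[0, (1-γ)⁻¹]`, and
`V₁ s - V₂ s = ∫ (Q₁ - Q₂)(s, ·) dπ₁(s) + (∫ Q₂(s, ·) dπ₁(s) - ∫ Q₂(s, ·) dπ₂(s))`.
The first term is at most `γ ‖V₁ - V₂‖∞`. Since `Q₂(s, ·)` is within `(1-γ)⁻¹/2` of a constant,
the second is at most `(1-γ)⁻¹/2 · ‖dπ₁/dπ₂ - 1‖₁`, and `‖dπ₁/dπ₂ - 1‖₁ ≤ 2 √KL` by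
Cauchy–Schwarz and the pointwise bound `(√x - 1)² ≤ x log x - x + 1`.
Hence `‖V₁ - V₂‖∞ ≤ √ε_π / (1-γ)²`.
-/

open MeasureTheory ProbabilityTheory
open scoped ENNReal

open scoped Classical in
/-- The Kullback–Leibler divergence `∫ log (dμ/dν) dμ` between two measures,
equal to `+∞` when `μ` is not absolutely continuous with respect to `ν`
(or when the integrand is not integrable). -/
noncomputable def KL {X : Type*} [MeasurableSpace X] (μ ν : Measure X) : ℝ≥0∞ :=
  if μ ≪ ν ∧ Integrable (fun x => Real.log ((μ.rnDeriv ν) x).toReal) μ then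
    ENNReal.ofReal (∫ x, Real.log ((μ.rnDeriv ν) x).toReal ∂μ) else ⊤

open Set InformationTheory

section Integrals

variable {X : Type*} [MeasurableSpace X] {μ : Measure X} {f g : X → ℝ}

lemma integrable_of_mem_Icc [IsFiniteMeasure μ] (hf : AEStronglyMeasurable f μ) {a b : ℝ}
    (hab : ∀ x, f x ∈ Icc a b) : Integrable f μ :=
  ⟨hf, .of_mem_Icc a b (ae_of_all _ hab)⟩

lemma integral_mem_Icc [IsProbabilityMeasure μ] (hf : AEStronglyMeasurable f μ) {a b : ℝ}
    (hab : ∀ x, f x ∈ Icc a b) : ∫ x, f x ∂μ ∈ Icc a b :=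
  (convex_Icc a b).integral_mem isClosed_Icc (ae_of_all _ hab) (integrable_of_mem_Icc hf hab)

lemma abs_integral_sub_integral_le_of_abs_sub_le [IsProbabilityMeasure μ] (hf : Integrable f μ)
    (hg : Integrable g μ) {C : ℝ} (hfg : ∀ x, |f x - g x| ≤ C) :
    |∫ x, f x ∂μ - ∫ x, g x ∂μ| ≤ C := by
  rw [← integral_sub hf hg]
  simpa using
    norm_integral_le_of_norm_le_const (μ := μ) (f := fun x => f x - g x) (ae_of_all _ hfg)

end Integrals

section Pinsker

variable {X : Type*} [MeasurableSpace X] {μ ν : Measure X}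

lemma sq_sqrt_sub_one_le_klFun {y : ℝ} (hy : 0 ≤ y) : (√y - 1) ^ 2 ≤ klFun y := by
  obtain ⟨u, hu, rfl⟩ : ∃ u, 0 ≤ u ∧ y = u ^ 2 :=
    ⟨√y, Real.sqrt_nonneg y, (Real.sq_sqrt hy).symm⟩
  rw [Real.sqrt_sq hu, klFun_apply, Real.log_pow]
  rcases hu.eq_or_lt with rfl | hu
  · simp
  have hlog : u ^ 2 * (1 - u⁻¹) ≤ u ^ 2 * Real.log u :=
    mul_le_mul_of_nonneg_left (Real.one_sub_inv_le_log_of_pos hu) (sq_nonneg u)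
  have hinv : u * u⁻¹ = 1 := mul_inv_cancel₀ hu.ne'
  push_cast
  nlinarith

lemma two_mul_mul_abs_sub_one_le (t : ℝ) {y : ℝ} (hy : 0 ≤ y) :
    2 * t * |y - 1| ≤ t ^ 2 * klFun y + 2 * (y + 1) := by
  have hkl := sq_sqrt_sub_one_le_klFun hy
  obtain ⟨u, hu, rfl⟩ : ∃ u, 0 ≤ u ∧ y = u ^ 2 :=
    ⟨√y, Real.sqrt_nonneg y, (Real.sq_sqrt hy).symm⟩
  rw [Real.sqrt_sq hu] at hkl
  have hfac : |u ^ 2 - 1| = |u - 1| * (u + 1) := by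
    rw [show u ^ 2 - 1 = (u - 1) * (u + 1) by ring, abs_mul,
      abs_of_nonneg (by linarith : 0 ≤ u + 1)]
  rw [hfac]
  nlinarith [sq_nonneg (t * |u - 1| - (u + 1)), sq_abs (u - 1), sq_nonneg (u - 1),
    mul_le_mul_of_nonneg_left hkl (sq_nonneg t)]

variable [IsProbabilityMeasure μ] [IsProbabilityMeasure ν]

lemma integral_abs_toReal_rnDeriv_sub_one_le (hac : μ ≪ ν) (hint : Integrable (llr μ ν) μ) :
    ∫ x, |(μ.rnDeriv ν x).toReal - 1| ∂ν ≤ 2 * √(klDiv μ ν).toReal := by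
  set ρ : X → ℝ := fun x => (μ.rnDeriv ν x).toReal
  set I := ∫ x, |ρ x - 1| ∂ν
  set K := (klDiv μ ν).toReal
  have hρ : Integrable ρ ν := Measure.integrable_toReal_rnDeriv
  have hρ_one : ∫ x, ρ x ∂ν = 1 := by simp [ρ, Measure.integral_toReal_rnDeriv hac]
  have hkl : Integrable (fun x => klFun (ρ x)) ν := (integrable_klFun_rnDeriv_iff hac).mpr hint
  have hK : K = ∫ x, klFun (ρ x) ∂ν := toReal_klDiv_eq_integral_klFun hac
  have hρ₁ : Integrable (fun x => ρ x + 1) ν := hρ.add (integrable_const 1)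
  -- Cauchy–Schwarz, in the form "a nonnegative quadratic has nonpositive discriminant".
  have hquad : ∀ t : ℝ, 0 ≤ K * (t * t) + (-2 * I) * t + 4 := by
    intro t
    have : 2 * t * I ≤ t ^ 2 * K + 4 := calc
      2 * t * I = ∫ x, 2 * t * |ρ x - 1| ∂ν := (integral_const_mul _ _).symm
      _ ≤ ∫ x, (t ^ 2 * klFun (ρ x) + 2 * (ρ x + 1)) ∂ν :=
        integral_mono ((hρ.sub (integrable_const 1)).abs.const_mul _)
          ((hkl.const_mul _).add (hρ₁.const_mul _))
          fun x => two_mul_mul_abs_sub_one_le t ENNReal.toReal_nonneg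
      _ = t ^ 2 * K + 4 := by
        rw [integral_add (hkl.const_mul _) (hρ₁.const_mul _),
          integral_const_mul, integral_const_mul, integral_add hρ (integrable_const 1), hρ_one,
          hK]
        norm_num
    nlinarith
  have hdisc := discrim_le_zero hquad
  rw [discrim] at hdisc
  have : |I / 2| ≤ √K := Real.abs_le_sqrt (by nlinarith)
  linarith [le_abs_self (I / 2)]

lemma abs_integral_sub_integral_le_mul (hac : μ ≪ ν) {f : X → ℝ}
    (hf : AEStronglyMeasurable f ν) {c C : ℝ} (hfC : ∀ x, |f x - c| ≤ C) :
    |∫ x, f x ∂μ - ∫ x, f x ∂ν| ≤ C * ∫ x, |(μ.rnDeriv ν x).toReal - 1| ∂ν := by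
  set ρ : X → ℝ := fun x => (μ.rnDeriv ν x).toReal
  have hμ : Integrable (fun x => f x - c) μ :=
    .of_bound ((hf.mono_ac hac).sub aestronglyMeasurable_const) C (ae_of_all _ hfC)
  have hν : Integrable (fun x => f x - c) ν :=
    .of_bound (hf.sub aestronglyMeasurable_const) C (ae_of_all _ hfC)
  have hρμ : Integrable (fun x => ρ x * (f x - c)) ν :=
    (integrable_toReal_rnDeriv_mul_iff hac).mpr hμ
  have hshift : ∫ x, f x ∂μ - ∫ x, f x ∂ν = ∫ x, (ρ x - 1) * (f x - c) ∂ν := calc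
    ∫ x, f x ∂μ - ∫ x, f x ∂ν = ∫ x, (f x - c) ∂μ - ∫ x, (f x - c) ∂ν := by
      have hfμ : Integrable f μ := by simpa [sub_eq_add_neg, integrable_add_const_iff] using hμ
      have hfν : Integrable f ν := by simpa [sub_eq_add_neg, integrable_add_const_iff] using hν
      rw [integral_sub hfμ (integrable_const c), integral_sub hfν (integrable_const c)]
      simp
    _ = ∫ x, ρ x * (f x - c) ∂ν - ∫ x, (f x - c) ∂ν := by
      rw [integral_toReal_rnDeriv_mul hac]
    _ = ∫ x, (ρ x - 1) * (f x - c) ∂ν := by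
      rw [← integral_sub hρμ hν]
      simp only [sub_mul, one_mul]
  rw [hshift, ← integral_const_mul]
  refine (abs_integral_le_integral_abs).trans (integral_mono ?_ ?_ fun x => ?_)
  · exact (hρμ.sub hν).abs.congr
      (ae_of_all _ fun x => by simp only [Pi.sub_apply, sub_mul, one_mul])
  · exact (Measure.integrable_toReal_rnDeriv.sub (integrable_const 1)).abs.const_mul C
  · rw [abs_mul, mul_comm]
    exact mul_le_mul_of_nonneg_right (hfC x) (abs_nonneg _)

lemma KL_eq_klDiv : KL μ ν = klDiv μ ν := by
  simp only [KL, klDiv_def, probReal_univ, add_sub_cancel_right]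
  rfl

lemma abs_integral_sub_integral_le_of_KL_le {ε : ℝ} (hKL : KL μ ν ≤ ENNReal.ofReal ε)
    {f : X → ℝ} (hf : AEStronglyMeasurable f ν) {c C : ℝ} (hfC : ∀ x, |f x - c| ≤ C) :
    |∫ x, f x ∂μ - ∫ x, f x ∂ν| ≤ 2 * C * √ε := by
  rw [KL_eq_klDiv] at hKL
  obtain ⟨hac, hint⟩ := klDiv_ne_top_iff.mp (ne_top_of_le_ne_top ENNReal.ofReal_ne_top hKL)
  have hC : 0 ≤ C := (abs_nonneg _).trans (hfC (nonempty_of_isProbabilityMeasure μ).some)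
  have hKε : √(klDiv μ ν).toReal ≤ √ε := by
    rcases le_total ε 0 with hε | hε
    · rw [ENNReal.ofReal_of_nonpos hε, nonpos_iff_eq_zero] at hKL
      simp [hKL]
    · exact Real.sqrt_le_sqrt (ENNReal.toReal_le_of_le_ofReal hε hKL)
  calc |∫ x, f x ∂μ - ∫ x, f x ∂ν| ≤ C * ∫ x, |(μ.rnDeriv ν x).toReal - 1| ∂ν :=
        abs_integral_sub_integral_le_mul hac hf hfC
    _ ≤ C * (2 * √ε) := by
        gcongr
        exact (integral_abs_toReal_rnDeriv_sub_one_le hac hint).trans (by gcongr)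
    _ = 2 * C * √ε := by ring

end Pinsker

lemma reward_add_mem_Icc {S A : Type*} {r : S × A × S → ℝ} {γ : ℝ}
    (hr : ∀ s a s', 0 ≤ r (s, a, s') ∧ r (s, a, s') ≤ 1) (hγ : 0 ≤ γ)
    {V : S → ℝ} {m M : ℝ} (hV : ∀ s, V s ∈ Icc m M) (s : S) (a : A) (s' : S) :
    r (s, a, s') + γ * V s' ∈ Icc (γ * m) (1 + γ * M) := by
  obtain ⟨hr₀, hr₁⟩ := hr s a s'
  constructor <;> nlinarith [(hV s').1, (hV s').2]

section MDP

variable {S A : Type*} [MeasurableSpace S] [MeasurableSpace A]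
  (P : Kernel (S × A) S) (r : S × A × S → ℝ) (γ : ℝ)

noncomputable def qValue (V : S → ℝ) (s : S) (a : A) : ℝ :=
  ∫ s', (r (s, a, s') + γ * V s') ∂(P (s, a))

variable {P r γ}

lemma measurable_qValue [IsSFiniteKernel P] (hr : Measurable r) {V : S → ℝ} (hV : Measurable V)
    (s : S) : Measurable (qValue P r γ V s) := by
  have hF : StronglyMeasurable fun q : (S × A) × S => r (q.1.1, q.1.2, q.2) + γ * V q.2 :=
    (by fun_prop : Measurable _).stronglyMeasurable
  exact hF.integral_kernel_prod_right'.measurable.comp measurable_prodMk_left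

variable [IsMarkovKernel P]

lemma qValue_mem_Icc (hr : Measurable r)
    (hr_bounds : ∀ s a s', 0 ≤ r (s, a, s') ∧ r (s, a, s') ≤ 1) (hγ : 0 ≤ γ)
    {V : S → ℝ} (hVm : Measurable V) {m M : ℝ} (hV : ∀ s, V s ∈ Icc m M)
    (s : S) (a : A) : qValue P r γ V s a ∈ Icc (γ * m) (1 + γ * M) :=
  integral_mem_Icc (by fun_prop) (reward_add_mem_Icc hr_bounds hγ hV s a)

lemma value_mem_Icc (π : Kernel S A) [IsMarkovKernel π] (hr : Measurable r)
    (hr_bounds : ∀ s a s', 0 ≤ r (s, a, s') ∧ r (s, a, s') ≤ 1) (hγ₀ : 0 ≤ γ) (hγ₁ : γ < 1)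
    {V : S → ℝ} (hVm : Measurable V) (hVb : ∃ M, ∀ s, |V s| ≤ M)
    (hBellman : ∀ s, V s = ∫ a, qValue P r γ V s a ∂(π s)) (s : S) :
    V s ∈ Icc 0 (1 - γ)⁻¹ := by
  have : Nonempty S := ⟨s⟩
  obtain ⟨M, hM⟩ := hVb
  have hV : ∀ s, V s ∈ Icc (⨅ s, V s) (⨆ s, V s) := fun s =>
    ⟨ciInf_le ⟨-M, by rintro _ ⟨s, rfl⟩; exact (abs_le.mp (hM s)).1⟩ s,
      le_ciSup ⟨M, by rintro _ ⟨s, rfl⟩; exact (abs_le.mp (hM s)).2⟩ s⟩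
  have hBellman_mem : ∀ s, V s ∈ Icc (γ * ⨅ s, V s) (1 + γ * ⨆ s, V s) := fun s =>
    hBellman s ▸ integral_mem_Icc (measurable_qValue hr hVm s).aestronglyMeasurable
      (qValue_mem_Icc hr hr_bounds hγ₀ hVm hV s)
  have hinf : γ * ⨅ s, V s ≤ ⨅ s, V s := le_ciInf fun s => (hBellman_mem s).1
  have hsup : ⨆ s, V s ≤ 1 + γ * ⨆ s, V s := ciSup_le fun s => (hBellman_mem s).2
  refine ⟨by nlinarith [(hV s).1], (hV s).2.trans ?_⟩
  rw [← one_div, le_div_iff₀ (by linarith)]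
  linarith

lemma abs_integral_qValue_sub_integral_qValue_le (μ ν : Measure A) [IsProbabilityMeasure μ]
    [IsProbabilityMeasure ν] {ε : ℝ} (hKL : KL μ ν ≤ ENNReal.ofReal ε) (hr : Measurable r)
    (hr_bounds : ∀ s a s', 0 ≤ r (s, a, s') ∧ r (s, a, s') ≤ 1) (hγ₀ : 0 ≤ γ) (hγ₁ : γ < 1)
    {V : S → ℝ} (hVm : Measurable V) (hV : ∀ s, V s ∈ Icc 0 (1 - γ)⁻¹) (s : S) :
    |∫ a, qValue P r γ V s a ∂μ - ∫ a, qValue P r γ V s a ∂ν| ≤ √ε / (1 - γ) := by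
  have h1γ : 1 - γ ≠ 0 := by linarith
  have hone : 1 + γ * (1 - γ)⁻¹ = (1 - γ)⁻¹ := by field_simp; ring
  refine (abs_integral_sub_integral_le_of_KL_le hKL
    (measurable_qValue hr hVm s).aestronglyMeasurable (c := (1 - γ)⁻¹ / 2)
    (C := (1 - γ)⁻¹ / 2) fun a => ?_).trans_eq (by field_simp)
  have hQ := qValue_mem_Icc (P := P) hr hr_bounds hγ₀ hVm hV s a
  rw [abs_sub_le_iff]
  constructor <;> linarith [hQ.1, hQ.2]

lemma abs_value_sub_value_le (π₁ π₂ : Kernel S A) [IsMarkovKernel π₁] [IsMarkovKernel π₂]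
    (hr : Measurable r) (hr_bounds : ∀ s a s', 0 ≤ r (s, a, s') ∧ r (s, a, s') ≤ 1)
    (hγ₀ : 0 ≤ γ) (hγ₁ : γ < 1) {V₁ V₂ : S → ℝ} (hV₁m : Measurable V₁) (hV₂m : Measurable V₂)
    (hV₁b : ∃ M, ∀ s, |V₁ s| ≤ M) (hV₂b : ∃ M, ∀ s, |V₂ s| ≤ M)
    (hBellman₁ : ∀ s, V₁ s = ∫ a, qValue P r γ V₁ s a ∂(π₁ s))
    (hBellman₂ : ∀ s, V₂ s = ∫ a, qValue P r γ V₂ s a ∂(π₂ s)) {δ : ℝ}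
    (hδ : ∀ s, |∫ a, qValue P r γ V₂ s a ∂(π₁ s) - ∫ a, qValue P r γ V₂ s a ∂(π₂ s)| ≤ δ)
    (s : S) : |V₁ s - V₂ s| ≤ δ / (1 - γ) := by
  have : Nonempty S := ⟨s⟩
  have hV₁ := value_mem_Icc π₁ hr hr_bounds hγ₀ hγ₁ hV₁m hV₁b hBellman₁
  have hV₂ := value_mem_Icc π₂ hr hr_bounds hγ₀ hγ₁ hV₂m hV₂b hBellman₂
  set D := ⨆ s, |V₁ s - V₂ s|
  have hD : ∀ s, |V₁ s - V₂ s| ≤ D := le_ciSup ⟨(1 - γ)⁻¹, by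
    rintro _ ⟨s, rfl⟩
    exact abs_sub_le_of_nonneg_of_le (hV₁ s).1 (hV₁ s).2 (hV₂ s).1 (hV₂ s).2⟩
  have hQ (V : S → ℝ) (hVm : Measurable V) (hV : ∀ s, V s ∈ Icc 0 (1 - γ)⁻¹) (s : S) :
      Integrable (qValue P r γ V s) (π₁ s) :=
    integrable_of_mem_Icc (measurable_qValue hr hVm s).aestronglyMeasurable
      (qValue_mem_Icc hr hr_bounds hγ₀ hVm hV s)
  have hQ_sub (s : S) (a : A) : |qValue P r γ V₁ s a - qValue P r γ V₂ s a| ≤ γ * D := by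
    refine abs_integral_sub_integral_le_of_abs_sub_le
      (integrable_of_mem_Icc (by fun_prop) (reward_add_mem_Icc hr_bounds hγ₀ hV₁ s a))
      (integrable_of_mem_Icc (by fun_prop) (reward_add_mem_Icc hr_bounds hγ₀ hV₂ s a))
      fun s' => ?_
    rw [add_sub_add_left_eq_sub, ← mul_sub, abs_mul, abs_of_nonneg hγ₀]
    exact mul_le_mul_of_nonneg_left (hD s') hγ₀
  have hstep (s : S) : |V₁ s - V₂ s| ≤ γ * D + δ := calc
    |V₁ s - V₂ s| = |(∫ a, qValue P r γ V₁ s a ∂(π₁ s) - ∫ a, qValue P r γ V₂ s a ∂(π₁ s)) +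
        (∫ a, qValue P r γ V₂ s a ∂(π₁ s) - ∫ a, qValue P r γ V₂ s a ∂(π₂ s))| := by
      rw [hBellman₁ s, hBellman₂ s, sub_add_sub_cancel]
    _ ≤ γ * D + δ := (abs_add_le _ _).trans (add_le_add
        (abs_integral_sub_integral_le_of_abs_sub_le (hQ V₁ hV₁m hV₁ s) (hQ V₂ hV₂m hV₂ s)
          (hQ_sub s)) (hδ s))
  have hD_rec : D ≤ γ * D + δ := ciSup_le hstep
  rw [le_div_iff₀ (by linarith)]
  nlinarith [hD s]

end MDP

/-- **Policy-difference bound.** Two policies that are `ε_π`-close in KL divergence at every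
state, acting in the same environment with rewards in `[0,1]`, have value functions that
differ pointwise by at most `√(2ε_π)/(1-γ)²`. -/
theorem value_policy_difference_bound
    {S A : Type*} [MeasurableSpace S] [MeasurableSpace A]
    (π₁ π₂ : Kernel S A) [IsMarkovKernel π₁] [IsMarkovKernel π₂]
    (P : Kernel (S × A) S) [IsMarkovKernel P]
    (r : S × A × S → ℝ) (hr : Measurable r)
    (hr_bounds : ∀ s a s', 0 ≤ r (s, a, s') ∧ r (s, a, s') ≤ 1)
    (γ : ℝ) (hγ : γ ∈ Set.Ioo (0 : ℝ) 1)
    (V₁ V₂ : S → ℝ) (hV₁m : Measurable V₁) (hV₂m : Measurable V₂)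
    (hV₁b : ∃ M, ∀ s, |V₁ s| ≤ M) (hV₂b : ∃ M, ∀ s, |V₂ s| ≤ M)
    (hBellman₁ : ∀ s, V₁ s = ∫ a, ∫ s', (r (s, a, s') + γ * V₁ s') ∂(P (s, a)) ∂(π₁ s))
    (hBellman₂ : ∀ s, V₂ s = ∫ a, ∫ s', (r (s, a, s') + γ * V₂ s') ∂(P (s, a)) ∂(π₂ s))
    (ε_π : ℝ) (hKL : ∀ s, KL (π₁ s) (π₂ s) ≤ ENNReal.ofReal ε_π) :
    ∀ s, |V₁ s - V₂ s| ≤ Real.sqrt (2 * ε_π) / (1 - γ) ^ 2 := by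
  obtain ⟨hγ₀, hγ₁⟩ := hγ
  have hV₂ := value_mem_Icc π₂ hr hr_bounds hγ₀.le hγ₁ hV₂m hV₂b hBellman₂
  intro s
  calc |V₁ s - V₂ s| ≤ √ε_π / (1 - γ) / (1 - γ) :=
        abs_value_sub_value_le π₁ π₂ hr hr_bounds hγ₀.le hγ₁ hV₁m hV₂m hV₁b hV₂b
          hBellman₁ hBellman₂ (fun s => abs_integral_qValue_sub_integral_qValue_le _ _ (hKL s)
            hr hr_bounds hγ₀.le hγ₁ hV₂m hV₂ s) s
    _ ≤ √(2 * ε_π) / (1 - γ) ^ 2 := by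
        rw [div_div, ← sq, Real.sqrt_mul zero_le_two]
        gcongr
        exact le_mul_of_one_le_left (Real.sqrt_nonneg _) (Real.one_le_sqrt.mpr one_le_two)
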